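/- In the differential ring A = ℂ[u^{(n)} : n ∈ ℤ₊] of differential polynomials in one variable with ∂(u^{(n)}) = u^{(n+1)}, the operators u and ∂ satisfy u·S₁ = ∂·A₁ with A₁ = u², S₁ = u∂ + 2u' ∈ A[∂]; however, there exist no B ∈ A[∂] and monic S ∈ A[∂] with u·S = ∂·B. Consequently, the pseudodifferential operator ∂⁻¹ ∘ u ∈ A((∂⁻¹)) is a left fraction but not a right fraction A S⁻¹ with A ∈ A[∂] and S ∈ A[∂] monic. -/

import Mathlib

/-!
Comparing coefficients of `∂ᵏ` in `u·S = ∂·B` gives `u sₖ = bₖ₋₁ + bₖ'`. Read off the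
coefficient of the linear monomial `u⁽ᵐ⁾` in both sides: on `u sₖ` it is `0` for `m ≥ 1`
and the constant term of `sₖ` for `m = 0`, while differentiation kills it for `m = 0` and
shifts it from `m` to `m + 1`. Starting from `s_N = 1`, the coefficient of `u⁽ʲ⁾` in
`b_{N-1-j}` is therefore `(-1)ʲ` for every `j`; at `j = N + 1` this makes `b₋₂ ≠ 0`, so `B`
is not a differential operator.

A right fraction `∂⁻¹u = A S⁻¹` with invertible monic `S` would give `u S = ∂ A`; if `S` is
not invertible, `Ring.inverse S = 0` and the equation would force `∂⁻¹u = 0`.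
-/

/-- An axiomatization of the ring `R((∂⁻¹))` of pseudodifferential operators over a
commutative differential ring `(R, δ)`: elements are determined by their coefficients
`coeff A : ℤ → R` (supported in a half-line `n ≤ N`), with the product determined by
`∂ⁿ ∘ a = Σ_{j≥0} binom(n,j) δʲ(a) ∂^{n-j}`, equivalently by the symbol formula
`coeff (A∘B) k = Σ_{m+n-j=k} binom(m,j) aₘ δʲ(bₙ)`. -/
structure PseudoDiffOps (R : Type) [CommRing R] (δ : R → R) : Type 1 where
  carrier : Type
  [ringCarrier : Ring carrier]
  /-- the embedding of `R` as the operators of order `≤ 0` with only a constant term -/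
  const : R →+* carrier
  /-- the derivation `∂` as an element of the ring -/
  d : carrier
  /-- the element `∂⁻¹` -/
  dinv : carrier
  δ_add : ∀ a b : R, δ (a + b) = δ a + δ b
  δ_leibniz : ∀ a b : R, δ (a * b) = δ a * b + a * δ b
  /-- `coeff A n` is the coefficient of `∂ⁿ` in `A` -/
  coeff : carrier → ℤ → R
  coeff_injective : Function.Injective coeff
  coeff_add : ∀ A B n, coeff (A + B) n = coeff A n + coeff B n
  coeff_one : ∀ n, coeff 1 n = if n = 0 then 1 else 0
  coeff_const : ∀ (a : R) (n), coeff (const a) n = if n = 0 then a else 0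
  coeff_d : ∀ n, coeff d n = if n = 1 then 1 else 0
  coeff_dinv : ∀ n, coeff dinv n = if n = -1 then 1 else 0
  d_dinv : d * dinv = 1
  dinv_d : dinv * d = 1
  coeff_bddAbove : ∀ A, ∃ N : ℤ, ∀ n, N < n → coeff A n = 0
  exists_of_coeffs : ∀ f : ℤ → R, (∃ N : ℤ, ∀ n, N < n → f n = 0) → ∃ A, coeff A = f
  coeff_mul : ∀ (A B : carrier) (NA NB k : ℤ),
    (∀ n, NA < n → coeff A n = 0) → (∀ n, NB < n → coeff B n = 0) →
    coeff (A * B) k =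
      ∑ m ∈ Finset.Icc (k - NB) NA, ∑ j ∈ Finset.range ((NB - k + m).toNat + 1),
        ((Ring.choose m j : ℤ) : R) * (coeff A m * δ^[j] (coeff B (k + j - m)))

attribute [instance] PseudoDiffOps.ringCarrier

namespace PseudoDiffOps

variable {R : Type} [CommRing R] {δ : R → R} (P : PseudoDiffOps R δ)

/-- the order of a pseudodifferential operator: the largest `n` with `coeff A n ≠ 0`
(junk value for `A = 0`). -/
noncomputable def ord (A : P.carrier) : ℤ := sSup {n : ℤ | P.coeff A n ≠ 0}

/-- the leading coefficient of a pseudodifferential operator -/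
noncomputable def leadCoeff (A : P.carrier) : R := P.coeff A (P.ord A)

/-- `A` is a differential operator, i.e. lies in `R[∂] ⊆ R((∂⁻¹))` -/
def IsDiffOp (A : P.carrier) : Prop := ∀ n : ℤ, n < 0 → P.coeff A n = 0

/-- `A` is monic, i.e. has leading coefficient `1` -/
noncomputable def Monic (A : P.carrier) : Prop := P.leadCoeff A = 1

end PseudoDiffOps

open MvPolynomial

/-- the algebra of differential polynomials `ℂ[u⁽ⁿ⁾ : n ∈ ℤ₊]`, with `u⁽ⁿ⁾ = X n` -/
noncomputable abbrev DPoly : Type := MvPolynomial ℕ ℂ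

/-- the derivation `∂` on `ℂ[u⁽ⁿ⁾]`, sending `u⁽ⁿ⁾` to `u⁽ⁿ⁺¹⁾` -/
noncomputable def dpolyDer : DPoly → DPoly :=
  ⇑(MvPolynomial.mkDerivation ℂ (fun n : ℕ => (X (n + 1) : DPoly)))


namespace PseudoDiffOps

variable {R : Type} [CommRing R] {δ : R → R} (P : PseudoDiffOps R δ)

@[simp]
lemma coeff_zero (n : ℤ) : P.coeff 0 n = 0 := by
  simpa using P.coeff_add 0 0 n

lemma δ_zero (P : PseudoDiffOps R δ) : δ 0 = 0 := by
  simpa using P.δ_add 0 0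

lemma exists_ge_forall_gt_coeff_eq_zero (A : P.carrier) (k : ℤ) :
    ∃ N : ℤ, k ≤ N ∧ ∀ n, N < n → P.coeff A n = 0 := by
  obtain ⟨N, hN⟩ := P.coeff_bddAbove A
  exact ⟨max N k, le_max_right _ _, fun n hn => hN n (lt_of_le_of_lt (le_max_left _ _) hn)⟩

lemma coeff_const_mul (a : R) (B : P.carrier) (k : ℤ) :
    P.coeff (P.const a * B) k = a * P.coeff B k := by
  obtain ⟨NB, hk, hB⟩ := P.exists_ge_forall_gt_coeff_eq_zero B k
  have ha : ∀ n, (0 : ℤ) < n → P.coeff (P.const a) n = 0 := fun n hn => by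
    rw [P.coeff_const, if_neg hn.ne']
  rw [P.coeff_mul _ _ 0 NB k ha hB,
    Finset.sum_eq_single_of_mem 0 (Finset.mem_Icc.mpr ⟨by omega, le_rfl⟩)]
  · rw [Finset.sum_eq_single_of_mem 0 (by simp)]
    · simp [P.coeff_const]
    · intro j _ hj
      simp [Ring.choose_zero_ite, hj]
  · intro m _ hm
    simp [P.coeff_const, hm]

lemma coeff_d_mul (B : P.carrier) (k : ℤ) :
    P.coeff (P.d * B) k = P.coeff B (k - 1) + δ (P.coeff B k) := by
  obtain ⟨NB, hk, hB⟩ := P.exists_ge_forall_gt_coeff_eq_zero B k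
  have hd : ∀ n, (1 : ℤ) < n → P.coeff P.d n = 0 := fun n hn => by
    rw [P.coeff_d, if_neg hn.ne']
  rw [P.coeff_mul _ _ 1 NB k hd hB,
    Finset.sum_eq_single_of_mem 1 (Finset.mem_Icc.mpr ⟨by omega, le_rfl⟩)]
  · have hsub : Finset.range 2 ⊆ Finset.range ((NB - k + 1).toNat + 1) :=
      Finset.range_subset_range.mpr (by omega)
    -- `choose 1 j = 0` for `j ≥ 2`, so only the terms `j = 0, 1` survive
    rw [← Finset.sum_subset hsub fun j _ hj => ?_]
    · simp [Finset.sum_range_succ, P.coeff_d]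
    · rw [show (1 : ℤ) = ((1 : ℕ) : ℤ) from rfl, Ring.choose_natCast,
        Nat.choose_eq_zero_of_lt (by simpa using hj)]
      simp
  · intro m _ hm
    simp [P.coeff_d, hm]

lemma d_mul_const (a : R) : P.d * P.const a = P.const a * P.d + P.const (δ a) := by
  apply P.coeff_injective
  funext k
  rw [P.coeff_d_mul, P.coeff_add, P.coeff_const_mul, P.coeff_const, P.coeff_const,
    P.coeff_const, P.coeff_d]
  split_ifs <;> first | omega | simp [P.δ_zero]

lemma coeff_dinv_mul_const_neg_one (a : R) : P.coeff (P.dinv * P.const a) (-1) = a := by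
  have hdinv : ∀ n, (-1 : ℤ) < n → P.coeff P.dinv n = 0 := fun n hn => by
    rw [P.coeff_dinv, if_neg hn.ne']
  have ha : ∀ n, (0 : ℤ) < n → P.coeff (P.const a) n = 0 := fun n hn => by
    rw [P.coeff_const, if_neg hn.ne']
  rw [P.coeff_mul _ _ (-1) 0 (-1) hdinv ha]
  simp [P.coeff_dinv, P.coeff_const]

lemma inverse_d : Ring.inverse P.d = P.dinv :=
  Ring.inverse_unit ⟨P.d, P.dinv, P.d_dinv, P.dinv_d⟩

lemma d_ne_zero [Nontrivial R] : P.d ≠ 0 := fun h => by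
  simpa [P.coeff_d] using congrArg (P.coeff · 1) h

lemma isDiffOp_d : P.IsDiffOp P.d := fun n hn => by
  rw [P.coeff_d, if_neg (by omega)]

lemma isDiffOp_const (a : R) : P.IsDiffOp (P.const a) := fun n hn => by
  rw [P.coeff_const, if_neg hn.ne]

variable {P} in
lemma Monic.coeff_ord {S : P.carrier} (hS : P.Monic S) : P.coeff S (P.ord S) = 1 := hS

variable {P} in
lemma IsDiffOp.ord_nonneg [Nontrivial R] {S : P.carrier} (hS : P.IsDiffOp S)
    (hm : P.Monic S) : 0 ≤ P.ord S := by
  by_contra! h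
  simpa [hm.coeff_ord] using hS _ h

lemma not_exists_dinv_mul_const_eq_mul_inverse {a : R} (ha : a ≠ 0)
    (h : ¬ ∃ B S : P.carrier, P.IsDiffOp B ∧ P.IsDiffOp S ∧ P.Monic S ∧
      P.const a * S = P.d * B) :
    ¬ ∃ A S : P.carrier, P.IsDiffOp A ∧ P.IsDiffOp S ∧ P.Monic S ∧
      P.dinv * P.const a = A * Ring.inverse S := by
  rintro ⟨A, S, hA, hS, hM, heq⟩
  by_cases hu : IsUnit S
  · refine h ⟨A, S, hA, hS, hM, ?_⟩
    calc P.const a * S = P.d * (P.dinv * P.const a * S) := by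
          rw [← mul_assoc, ← mul_assoc, P.d_dinv, one_mul]
      _ = P.d * A := by rw [heq, mul_assoc, Ring.inverse_mul_cancel _ hu, mul_one]
  · rw [Ring.inverse_non_unit _ hu, mul_zero] at heq
    exact ha (by simpa [heq] using (P.coeff_dinv_mul_const_neg_one a).symm)

lemma exists_dinv_mul_const_eq_inverse_mul [Nontrivial R] (a : R) :
    ∃ S A : P.carrier, P.IsDiffOp S ∧ P.IsDiffOp A ∧ S ≠ 0 ∧
      P.dinv * P.const a = Ring.inverse S * A :=
  ⟨P.d, P.const a, P.isDiffOp_d, P.isDiffOp_const a, P.d_ne_zero, by rw [P.inverse_d]⟩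

end PseudoDiffOps

namespace DPoly

lemma dpolyDer_X (n : ℕ) : dpolyDer (X n) = X (n + 1) := by
  simp [dpolyDer]

lemma dpolyDer_add (f g : DPoly) : dpolyDer (f + g) = dpolyDer f + dpolyDer g := by
  simp [dpolyDer]

lemma dpolyDer_mul (f g : DPoly) : dpolyDer (f * g) = dpolyDer f * g + f * dpolyDer g := by
  simp only [dpolyDer, Derivation.leibniz, smul_eq_mul]
  ring

lemma dpolyDer_C (a : ℂ) : dpolyDer (C a) = 0 := by
  simp [dpolyDer, MvPolynomial.C_eq_smul_one]

lemma dpolyDer_X_zero_sq : dpolyDer (X 0 ^ 2) = X 0 * (2 * X 1) := by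
  rw [sq, dpolyDer_mul, dpolyDer_X]
  ring

noncomputable def linCoeff (m : ℕ) (f : DPoly) : ℂ := coeff (Finsupp.single m 1) f

lemma linCoeff_add (m : ℕ) (f g : DPoly) : linCoeff m (f + g) = linCoeff m f + linCoeff m g :=
  coeff_add _ _ _

@[simp]
lemma linCoeff_zero (m : ℕ) : linCoeff m 0 = 0 := coeff_zero _

@[simp]
lemma linCoeff_C (m : ℕ) (a : ℂ) : linCoeff m (C a) = 0 := by
  rw [linCoeff, coeff_C, if_neg (Finsupp.single_ne_zero.mpr one_ne_zero).symm]

@[simp]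
lemma linCoeff_X (m n : ℕ) : linCoeff m (X n) = if n = m then 1 else 0 := by
  simp [linCoeff, coeff_X, Finsupp.single_eq_single_iff]

lemma linCoeff_mul (m : ℕ) (f g : DPoly) :
    linCoeff m (f * g) = constantCoeff f * linCoeff m g + linCoeff m f * constantCoeff g := by
  rw [linCoeff, coeff_mul, Finsupp.antidiagonal_single, Finset.sum_map,
    Finset.Nat.antidiagonal_succ, Finset.sum_cons, Finset.Nat.antidiagonal_zero,
    Finset.sum_map, Finset.sum_singleton]
  simp [linCoeff, constantCoeff_eq]

lemma constantCoeff_dpolyDer (f : DPoly) : constantCoeff (dpolyDer f) = 0 := by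
  induction f using MvPolynomial.induction_on with
  | C a => simp [dpolyDer_C]
  | add p q hp hq => rw [dpolyDer_add, map_add, hp, hq, add_zero]
  | mul_X p n hp => simp [dpolyDer_mul, dpolyDer_X, hp]

lemma linCoeff_zero_dpolyDer (f : DPoly) : linCoeff 0 (dpolyDer f) = 0 := by
  induction f using MvPolynomial.induction_on with
  | C a => simp [dpolyDer_C]
  | add p q hp hq => rw [dpolyDer_add, linCoeff_add, hp, hq, add_zero]
  | mul_X p n hp => simp [dpolyDer_mul, dpolyDer_X, linCoeff_add, linCoeff_mul, hp,
      constantCoeff_dpolyDer]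

lemma linCoeff_succ_dpolyDer (m : ℕ) (f : DPoly) :
    linCoeff (m + 1) (dpolyDer f) = linCoeff m f := by
  induction f using MvPolynomial.induction_on with
  | C a => simp [dpolyDer_C]
  | add p q hp hq => rw [dpolyDer_add, linCoeff_add, linCoeff_add, hp, hq]
  | mul_X p n hp =>
    simp only [dpolyDer_mul, dpolyDer_X, linCoeff_add, linCoeff_mul, hp, constantCoeff_dpolyDer,
      linCoeff_X, constantCoeff_X]
    by_cases h : n = m <;> simp [h]

lemma linCoeff_X_zero_mul (m : ℕ) (f : DPoly) :
    linCoeff m (X 0 * f) = if m = 0 then constantCoeff f else 0 := by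
  rcases m with _ | m <;> simp [linCoeff_mul]

lemma linCoeff_eq_neg_one_pow_of_X_zero_mul_eq (b s : ℤ → DPoly)
    (h : ∀ k, X 0 * s k = b (k - 1) + dpolyDer (b k)) {N : ℤ} (hN : s N = 1) (j : ℕ) :
    linCoeff j (b (N - 1 - j)) = (-1) ^ j := by
  induction j with
  | zero =>
    simpa [linCoeff_add, linCoeff_zero_dpolyDer, linCoeff_X_zero_mul, hN]
      using (congrArg (linCoeff 0) (h N)).symm
  | succ j ih =>
    have step := congrArg (linCoeff (j + 1)) (h (N - 1 - j))
    rw [linCoeff_X_zero_mul, if_neg j.succ_ne_zero, linCoeff_add, linCoeff_succ_dpolyDer, ih,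
      show N - 1 - (j : ℤ) - 1 = N - 1 - ((j + 1 : ℕ) : ℤ) by push_cast; ring] at step
    rw [pow_succ]
    linear_combination -step

end DPoly

open PseudoDiffOps DPoly in
lemma not_exists_const_X_zero_mul_monic_eq_d_mul (P : PseudoDiffOps DPoly dpolyDer) :
    ¬ ∃ B S : P.carrier, P.IsDiffOp B ∧ P.IsDiffOp S ∧ P.Monic S ∧
      P.const (X 0) * S = P.d * B := by
  rintro ⟨B, S, hB, hS, hM, heq⟩
  have hcoeff (k : ℤ) : X 0 * P.coeff S k = P.coeff B (k - 1) + dpolyDer (P.coeff B k) := by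
    simpa [coeff_const_mul, coeff_d_mul] using congrArg (P.coeff · k) heq
  have hN := hS.ord_nonneg hM
  -- the diagonal reaches `b₋₂`, which vanishes for a differential operator `B`
  have hlin :=
    linCoeff_eq_neg_one_pow_of_X_zero_mul_eq _ _ hcoeff hM.coeff_ord (P.ord S + 1).toNat
  rw [show P.ord S - 1 - ((P.ord S + 1).toNat : ℤ) = -2 by omega, hB (-2) (by norm_num)] at hlin
  exact (pow_ne_zero _ (neg_ne_zero.mpr one_ne_zero)) hlin.symm

/-- in `A[∂]` with `A = ℂ[u⁽ⁿ⁾]`, one has `u·S₁ = ∂·A₁` for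
`A₁ = u²`, `S₁ = u∂ + 2u'`; but there are no `B ∈ A[∂]` and monic `S ∈ A[∂]` with
`u·S = ∂·B`.  Consequently `∂⁻¹∘u ∈ A((∂⁻¹))` is a left fraction but not a right
fraction `A S⁻¹` with `A ∈ A[∂]` and `S ∈ A[∂]` monic. -/
theorem dpoly_left_fraction_not_right_fraction (P : PseudoDiffOps DPoly dpolyDer) :
    (P.const (X 0) * (P.const (X 0) * P.d + P.const (2 * X 1)) =
      P.d * P.const (X 0 ^ 2)) ∧
    (¬ ∃ B S : P.carrier, P.IsDiffOp B ∧ P.IsDiffOp S ∧ P.Monic S ∧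
      P.const (X 0) * S = P.d * B) ∧
    (∃ S A : P.carrier, P.IsDiffOp S ∧ P.IsDiffOp A ∧ S ≠ 0 ∧
      P.dinv * P.const (X 0) = Ring.inverse S * A) ∧
    (¬ ∃ A S : P.carrier, P.IsDiffOp A ∧ P.IsDiffOp S ∧ P.Monic S ∧
      P.dinv * P.const (X 0) = A * Ring.inverse S) := by
  have hno := not_exists_const_X_zero_mul_monic_eq_d_mul P
  refine ⟨?_, hno, P.exists_dinv_mul_const_eq_inverse_mul _,
    P.not_exists_dinv_mul_const_eq_mul_inverse (X_ne_zero 0) hno⟩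
  rw [P.d_mul_const, DPoly.dpolyDer_X_zero_sq, mul_add, ← mul_assoc, ← map_mul, ← map_mul, sq]
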